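/- With ρ, ζ interlacing positive increasing sequences as above and φ(z) = Π_{n≥1}(1 + z/ρ_n)/(1 + z/ζ_n), define b_0 = (1/ζ_1) lim_{n→∞} Π_{k=1}^n ρ_k/ζ_{k+1} and, for n ≥ 1, b_n = −(1 − ρ_n/ζ_n) Π_{k≠n} (1 − ρ_n/ζ_k)/(1 − ρ_n/ρ_k). Then b_0 ≥ 0, b_n > 0 for all n ≥ 1, and for all z > 0: 1/φ(z) = 1 + z·b_0 + Σ_{n≥1} b_n (1 − ρ_n/(ρ_n + z)). -/

import Mathlib

/-!
Cut the product after `N` factors and multiply by `1 + z/ζ_N`: the rational function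
`∏_{k<N} (1 + z/ζ_k)/(1 + z/ρ_k) · (1 + z/ζ_N)` has simple poles at the `-ρ_n`, and Lagrange
interpolation there gives its expansion `1 + z B_N + Σ_{n<N} b_n^{(N)} (1 - ρ_n/(ρ_n + z))`,
where `B_N → b_0` and `b_n^{(N)}` is `b_n` with its product cut at `N`. Interlacing makes every
`b_n^{(N)}` positive and nondecreasing in `N`, so the sum passes to the limit by monotone
convergence. All infinite products converge because `Σ (1/ζ_k - 1/ρ_k)` is dominated by the
telescoping series `Σ (1/ζ_k - 1/ζ_{k+1})`.
-/

open Filter Finset Topology Asymptotics Polynomial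

theorem Lagrange.prod_sub_div_prod_sub {F ι : Type*} [Field F] [DecidableEq ι] {s : Finset ι}
    {v : ι → F} (hvs : Set.InjOn v s) (c : ι → F) {x : F} (hx : ∀ i ∈ s, x ≠ v i) :
    (∏ i ∈ s, (x - c i)) / ∏ i ∈ s, (x - v i) =
      1 + ∑ i ∈ s, (∏ j ∈ s, (v i - c j)) / (∏ j ∈ s.erase i, (v i - v j)) / (x - v i) := by
  have hdeg : (nodal s c - nodal s v).degree < #s := by
    rw [← degree_nodal (v := c)]
    exact degree_sub_lt_left (by rw [degree_nodal, degree_nodal]) nodal_ne_zero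
      (by rw [nodal_monic.leadingCoeff, nodal_monic.leadingCoeff])
  have h := congrArg (eval x) (eq_interpolate hvs hdeg)
  simp only [eval_interpolate_not_at_node _ hx, eval_sub, eval_nodal, nodalWeight,
    prod_inv_distrib] at h
  rw [sum_congr rfl fun i hi => by rw [prod_eq_zero (f := fun j => v i - v j) hi (sub_self _),
    sub_zero]] at h
  have hv : ∏ i ∈ s, (x - v i) ≠ 0 := prod_ne_zero_iff.2 fun i hi => sub_ne_zero.2 (hx i hi)
  rw [div_eq_iff hv, add_mul, one_mul, ← sub_eq_iff_eq_add', h, mul_comm, sum_mul, sum_mul]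
  exact sum_congr rfl fun i _ => by ring

theorem prod_one_add_div_div_one_add_div {K ι : Type*} [Field K] [DecidableEq ι] {s : Finset ι}
    {c r : ι → K} (hc : ∀ i ∈ s, c i ≠ 0) (hr : ∀ i ∈ s, r i ≠ 0) (hrs : Set.InjOn r s) {x : K}
    (hx : ∀ i ∈ s, r i + x ≠ 0) :
    ∏ i ∈ s, (1 + x / c i) / (1 + x / r i) = ∏ i ∈ s, r i / c i +
      ∑ i ∈ s, (∏ j ∈ s, (1 - r i / c j)) / (∏ j ∈ s.erase i, (1 - r i / r j)) *
        (r i / (r i + x)) := by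
  have hmonic := Lagrange.prod_sub_div_prod_sub (v := fun i => -r i) (neg_injective.comp_injOn hrs)
    (fun i => -c i) (x := x) fun i hi h => hx i hi (by rw [h]; ring)
  simp only [sub_neg_eq_add, neg_add_eq_sub] at hmonic
  have hfactor : ∀ i ∈ s, (1 + x / c i) / (1 + x / r i) = r i / c i * ((x + c i) / (x + r i)) := by
    intro i hi
    rw [one_add_div (hc i hi), one_add_div (hr i hi), div_div_div_eq, div_mul_div_comm,
      add_comm (c i), add_comm (r i)]
    ring
  rw [prod_congr rfl hfactor, prod_mul_distrib, prod_div_distrib (f := fun i => x + c i), hmonic,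
    mul_add, mul_one, mul_sum]
  refine congrArg _ (sum_congr rfl fun i hi => ?_)
  have hC : ∏ j ∈ s, c j ≠ 0 := prod_ne_zero_iff.2 hc
  have hE : ∏ j ∈ s.erase i, r j ≠ 0 := prod_ne_zero_iff.2 fun j hj => hr j (mem_of_mem_erase hj)
  have hD : ∏ j ∈ s.erase i, (r j - r i) ≠ 0 := prod_ne_zero_iff.2 fun j hj =>
    sub_ne_zero.2 fun h => (ne_of_mem_erase hj) (hrs (mem_of_mem_erase hj) hi h)
  have := hx i hi
  have := hr i hi
  rw [prod_congr rfl fun j hj => one_sub_div (hc j hj),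
    prod_congr rfl fun j hj => one_sub_div (hr j (mem_of_mem_erase hj)), prod_div_distrib,
    prod_div_distrib, prod_div_distrib, ← mul_prod_erase s r hi, add_comm x]
  field_simp

theorem prod_range_div_mul {M : Type*} [DivisionCommMonoid M] (f g : ℕ → M) (N : ℕ) :
    (∏ k ∈ range N, f k / g k) * f N = f 0 * ∏ k ∈ range N, f (k + 1) / g k := by
  simp only [prod_div_distrib]
  rw [div_mul_eq_mul_div, ← prod_range_succ, prod_range_succ', mul_comm, mul_div_assoc]

theorem hasSum_of_tendsto_sum_range_of_monotone {c : ℕ → ℕ → ℝ} {b : ℕ → ℝ} {S : ℝ}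
    (hc : ∀ {N n}, n < N → 0 ≤ c N n) (hmono : ∀ {N n}, n < N → c N n ≤ c (N + 1) n)
    (hb : ∀ n, Tendsto (c · n) atTop (𝓝 (b n)))
    (hS : Tendsto (fun N => ∑ n ∈ range N, c N n) atTop (𝓝 S)) : HasSum b S := by
  have hcb {N n : ℕ} (hn : n < N) : c N n ≤ b n := by
    refine ge_of_tendsto (hb n) (eventually_atTop.2 ⟨N, fun M hM => ?_⟩)
    induction M, hM using Nat.le_induction with
    | base => exact le_rfl
    | succ M hM ih => exact ih.trans (hmono (hn.trans_le hM))
  have hb0 (n : ℕ) : 0 ≤ b n := (hc n.lt_succ_self).trans (hcb n.lt_succ_self)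
  have hbS (M : ℕ) : ∑ n ∈ range M, b n ≤ S := by
    refine le_of_tendsto_of_tendsto (tendsto_finsetSum _ fun n _ => hb n) hS ?_
    filter_upwards [eventually_ge_atTop M] with N hN
    exact sum_le_sum_of_subset_of_nonneg (range_subset_range.2 hN)
      fun n hn _ => hc (mem_range.1 hn)
  have hsum : Summable b := summable_of_sum_range_le hb0 hbS
  refine (le_antisymm (Real.tsum_le_of_sum_range_le hb0 hbS) ?_) ▸ hsum.hasSum
  exact le_of_tendsto' hS fun N => (sum_le_sum fun n hn => hcb (mem_range.1 hn)).trans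
    (hsum.sum_le_tsum _ fun n _ => hb0 n)

theorem summable_one_add_div_div_one_add_div_sub_one {p q : ℕ → ℝ} (hq : Tendsto q atTop atTop)
    (hpq : Summable fun k => (p k)⁻¹ - (q k)⁻¹) (w : ℝ) :
    Summable fun k => (1 + w / p k) / (1 + w / q k) - 1 := by
  have hden : Tendsto (fun k => 1 + w / q k) atTop (𝓝 1) := by
    simpa using tendsto_const_nhds.add (tendsto_const_nhds.div_atTop hq)
  refine summable_of_isBigO_nat (hpq.mul_left w) ?_
  have heq : (fun k => (1 + w / p k) / (1 + w / q k) - 1) =ᶠ[atTop]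
      fun k => w * ((p k)⁻¹ - (q k)⁻¹) * (1 + w / q k)⁻¹ := by
    filter_upwards [hden.eventually_ne one_ne_zero] with k hk
    field_simp
    ring
  refine heq.trans_isBigO ?_
  simpa using (isBigO_refl (fun k => w * ((p k)⁻¹ - (q k)⁻¹)) atTop).mul
    ((hden.inv₀ one_ne_zero).isBigO_one ℝ)

theorem Real.multipliable_of_summable_sub_one {ι : Type*} {f : ι → ℝ}
    (hf : Summable fun i => f i - 1) : Multipliable f := by
  simpa using Real.multipliable_one_add_of_summable hf

theorem Real.tprod_pos_of_summable_sub_one {ι : Type*} {f : ι → ℝ} (hpos : ∀ i, 0 < f i)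
    (hf : Summable fun i => f i - 1) : 0 < ∏' i, f i := by
  rw [← Real.rexp_tsum_eq_tprod hpos (by simpa using Real.summable_log_one_add_of_summable hf)]
  exact Real.exp_pos _

theorem one_sub_div_div_one_sub_div_pos {a b c : ℝ} (hb : 0 < b) (hc : 0 < c)
    (h : a < b ∧ a < c ∨ b < a ∧ c < a) : 0 < (1 - a / b) / (1 - a / c) := by
  rw [one_sub_div hb.ne', one_sub_div hc.ne', div_div_div_eq]
  rcases h with ⟨hab, hac⟩ | ⟨hab, hac⟩
  · exact div_pos (mul_pos (sub_pos.2 hab) hc) (mul_pos hb (sub_pos.2 hac))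
  · exact div_pos_of_neg_of_neg (mul_neg_of_neg_of_pos (sub_neg.2 hab) hc)
      (mul_neg_of_pos_of_neg hb (sub_neg.2 hac))

theorem HasProd.tendsto_prod_range_erase {M : Type*} [CommMonoid M] [TopologicalSpace M]
    {f : ℕ → M} {a : M} {n : ℕ} (h : HasProd (fun k : {k // k ≠ n} => f k) a) :
    Tendsto (fun N => ∏ k ∈ (range N).erase n, f k) atTop (𝓝 a) := by
  refine ((hasProd_subtype_iff_mulIndicator (s := {k | k ≠ n})).1 h).tendsto_prod_nat.congr
    fun N => ?_
  exact (prod_mulIndicator_eq_prod_filter (range N) (fun _ => f) (fun _ => {k | k ≠ n})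
    fun i => i).trans (by simp only [Set.mem_ofPred_eq, filter_ne'])

structure Interlacing (ζ ρ : ℕ → ℝ) : Prop where
  zeta_pos : ∀ n, 0 < ζ n
  zeta_lt_rho : ∀ n, ζ n < ρ n
  rho_lt_zeta_succ : ∀ n, ρ n < ζ (n + 1)

noncomputable def pfCoeff (ζ ρ : ℕ → ℝ) (n : ℕ) : ℝ :=
  -(1 - ρ n / ζ n) * ∏' k : {k : ℕ // k ≠ n}, (1 - ρ n / ζ k) / (1 - ρ n / ρ k)

/- The extra factor `1 - ρ n / ζ N`, which tends to `1`, makes this the exact coefficient of the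
`N`-th expansion (`pfCoeffTrunc_eq`, `Interlacing.prod_range_mul_eq`). -/
noncomputable def pfCoeffTrunc (ζ ρ : ℕ → ℝ) (N n : ℕ) : ℝ :=
  -(1 - ρ n / ζ n) * (1 - ρ n / ζ N) * ∏ k ∈ (range N).erase n, (1 - ρ n / ζ k) / (1 - ρ n / ρ k)

theorem pfCoeffTrunc_eq (ζ ρ : ℕ → ℝ) {N n : ℕ} (hn : n < N) :
    pfCoeffTrunc ζ ρ N n = (ρ n / ζ 0 - 1) *
      ((∏ k ∈ range N, (1 - ρ n / ζ (k + 1))) / ∏ k ∈ (range N).erase n, (1 - ρ n / ρ k)) := by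
  have hshift : (1 - ρ n / ζ 0) * ∏ k ∈ range N, (1 - ρ n / ζ (k + 1)) =
      (1 - ρ n / ζ n) * (∏ k ∈ (range N).erase n, (1 - ρ n / ζ k)) * (1 - ρ n / ζ N) := by
    rw [mul_comm, ← prod_range_succ' (fun k => 1 - ρ n / ζ k), prod_range_succ,
      mul_prod_erase _ (fun k => 1 - ρ n / ζ k) (mem_range.2 hn)]
  rw [pfCoeffTrunc, prod_div_distrib]
  linear_combination (1 / ∏ k ∈ (range N).erase n, (1 - ρ n / ρ k)) * hshift

namespace Interlacing

variable {ζ ρ : ℕ → ℝ}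

theorem rho_pos (h : Interlacing ζ ρ) (n : ℕ) : 0 < ρ n :=
  (h.zeta_pos n).trans (h.zeta_lt_rho n)

theorem strictMono_rho (h : Interlacing ζ ρ) : StrictMono ρ :=
  strictMono_nat_of_lt_succ fun n => (h.rho_lt_zeta_succ n).trans (h.zeta_lt_rho _)

theorem strictMono_zeta (h : Interlacing ζ ρ) : StrictMono ζ :=
  strictMono_nat_of_lt_succ fun n => (h.zeta_lt_rho n).trans (h.rho_lt_zeta_succ n)

theorem zeta_lt_rho_of_le (h : Interlacing ζ ρ) {k n : ℕ} (hkn : k ≤ n) : ζ k < ρ n :=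
  (h.strictMono_zeta.monotone hkn).trans_lt (h.zeta_lt_rho n)

theorem rho_lt_zeta_of_lt (h : Interlacing ζ ρ) {n k : ℕ} (hnk : n < k) : ρ n < ζ k :=
  (h.rho_lt_zeta_succ n).trans_le (h.strictMono_zeta.monotone hnk)

theorem tendsto_zeta_atTop (h : Interlacing ζ ρ) (hρ : Tendsto ρ atTop atTop) :
    Tendsto ζ atTop atTop :=
  (tendsto_add_atTop_iff_nat 1).1 (tendsto_atTop_mono (fun n => (h.rho_lt_zeta_succ n).le) hρ)

theorem summable_inv_sub_inv (h : Interlacing ζ ρ) : Summable fun k => (ζ k)⁻¹ - (ρ k)⁻¹ := by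
  refine summable_of_sum_range_le (c := (ζ 0)⁻¹)
    (fun k => sub_nonneg.2 (inv_anti₀ (h.zeta_pos k) (h.zeta_lt_rho k).le)) fun N => ?_
  calc ∑ k ∈ range N, ((ζ k)⁻¹ - (ρ k)⁻¹)
      ≤ ∑ k ∈ range N, ((ζ k)⁻¹ - (ζ (k + 1))⁻¹) := sum_le_sum fun k _ =>
        sub_le_sub_left (inv_anti₀ (h.rho_pos k) (h.rho_lt_zeta_succ k).le) _
    _ = (ζ 0)⁻¹ - (ζ N)⁻¹ := sum_range_sub' _ _
    _ ≤ (ζ 0)⁻¹ := sub_le_self _ (inv_nonneg.2 (h.zeta_pos N).le)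

theorem neg_one_sub_div_pos (h : Interlacing ζ ρ) (n : ℕ) : 0 < -(1 - ρ n / ζ n) :=
  neg_pos.2 (sub_neg.2 ((one_lt_div (h.zeta_pos n)).2 (h.zeta_lt_rho n)))

theorem one_sub_div_pos_of_lt (h : Interlacing ζ ρ) {n N : ℕ} (hn : n < N) :
    0 < 1 - ρ n / ζ N :=
  sub_pos.2 ((div_lt_one (h.zeta_pos N)).2 (h.rho_lt_zeta_of_lt hn))

theorem ratio_pos (h : Interlacing ζ ρ) {n k : ℕ} (hkn : k ≠ n) :
    0 < (1 - ρ n / ζ k) / (1 - ρ n / ρ k) := by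
  refine one_sub_div_div_one_sub_div_pos (h.zeta_pos k) (h.rho_pos k) ?_
  rcases hkn.lt_or_gt with hlt | hgt
  · exact .inr ⟨h.zeta_lt_rho_of_le hlt.le, h.strictMono_rho hlt⟩
  · exact .inl ⟨h.rho_lt_zeta_of_lt hgt, h.strictMono_rho hgt⟩

theorem summable_ratio_sub_one (h : Interlacing ζ ρ) (hρ : Tendsto ρ atTop atTop) (n : ℕ) :
    Summable fun k : {k // k ≠ n} => (1 - ρ n / ζ k) / (1 - ρ n / ρ k) - 1 := by
  have := summable_one_add_div_div_one_add_div_sub_one hρ h.summable_inv_sub_inv (-ρ n)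
  simp only [neg_div, ← sub_eq_add_neg] at this
  exact this.subtype {k | k ≠ n}

theorem pfCoeff_pos (h : Interlacing ζ ρ) (hρ : Tendsto ρ atTop atTop) (n : ℕ) :
    0 < pfCoeff ζ ρ n :=
  mul_pos (h.neg_one_sub_div_pos n) (Real.tprod_pos_of_summable_sub_one (fun k => h.ratio_pos k.2)
      (h.summable_ratio_sub_one hρ n))

theorem tendsto_pfCoeffTrunc (h : Interlacing ζ ρ) (hρ : Tendsto ρ atTop atTop) (n : ℕ) :
    Tendsto (pfCoeffTrunc ζ ρ · n) atTop (𝓝 (pfCoeff ζ ρ n)) := by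
  have hζN : Tendsto (fun N => 1 - ρ n / ζ N) atTop (𝓝 1) := by
    simpa using tendsto_const_nhds.sub (tendsto_const_nhds.div_atTop (h.tendsto_zeta_atTop hρ))
  have hprod := HasProd.tendsto_prod_range_erase (f := fun k => (1 - ρ n / ζ k) / (1 - ρ n / ρ k))
    (Real.multipliable_of_summable_sub_one (h.summable_ratio_sub_one hρ n)).hasProd
  simpa only [pfCoeffTrunc, pfCoeff, mul_one] using
    ((tendsto_const_nhds (x := -(1 - ρ n / ζ n))).mul hζN).mul hprod

theorem pfCoeffTrunc_pos (h : Interlacing ζ ρ) {N n : ℕ} (hn : n < N) :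
    0 < pfCoeffTrunc ζ ρ N n :=
  mul_pos (mul_pos (h.neg_one_sub_div_pos n) (h.one_sub_div_pos_of_lt hn))
    (prod_pos fun _ hk => h.ratio_pos (ne_of_mem_erase hk))

theorem pfCoeffTrunc_le_succ (h : Interlacing ζ ρ) {N n : ℕ} (hn : n < N) :
    pfCoeffTrunc ζ ρ N n ≤ pfCoeffTrunc ζ ρ (N + 1) n := by
  set P := ∏ k ∈ (range N).erase n, (1 - ρ n / ζ k) / (1 - ρ n / ρ k)
  have hP : 0 < -(1 - ρ n / ζ n) * P :=
    mul_pos (h.neg_one_sub_div_pos n) (prod_pos fun _ hk => h.ratio_pos (ne_of_mem_erase hk))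
  have hd : 0 < 1 - ρ n / ρ N := sub_pos.2 ((div_lt_one (h.rho_pos N)).2 (h.strictMono_rho hn))
  have hratio : 1 ≤ (1 - ρ n / ζ (N + 1)) / (1 - ρ n / ρ N) := by
    rw [one_le_div hd, sub_le_sub_iff_left]
    exact div_le_div_of_nonneg_left (h.rho_pos n).le (h.rho_pos N) (h.rho_lt_zeta_succ N).le
  rw [pfCoeffTrunc, pfCoeffTrunc, range_add_one, erase_insert_of_ne hn.ne', prod_insert
    (fun hN => (mem_range.1 (mem_of_mem_erase hN)).false)]
  calc -(1 - ρ n / ζ n) * (1 - ρ n / ζ N) * P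
      = -(1 - ρ n / ζ n) * P * (1 - ρ n / ζ N) := by ring
    _ ≤ -(1 - ρ n / ζ n) * P * ((1 - ρ n / ζ N) * ((1 - ρ n / ζ (N + 1)) / (1 - ρ n / ρ N))) := by
      gcongr
      exact le_mul_of_one_le_right (h.one_sub_div_pos_of_lt hn).le hratio
    _ = _ := by ring

theorem prod_range_mul_eq (h : Interlacing ζ ρ) (N : ℕ) {z : ℝ} (hz : 0 ≤ z) :
    (∏ k ∈ range N, (1 + z / ζ k) / (1 + z / ρ k)) * (1 + z / ζ N) =
      1 + z * (1 / ζ 0 * ∏ k ∈ range N, ρ k / ζ (k + 1)) +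
        ∑ n ∈ range N, pfCoeffTrunc ζ ρ N n * (1 - ρ n / (ρ n + z)) := by
  have hpf {x : ℝ} (hx : 0 ≤ x) := prod_one_add_div_div_one_add_div (s := range N)
    (c := fun k => ζ (k + 1)) (fun k _ => (h.zeta_pos _).ne') (fun k _ => (h.rho_pos k).ne')
    h.strictMono_rho.injective.injOn fun k _ => (add_pos_of_pos_of_nonneg (h.rho_pos k) hx).ne'
  have hmass := hpf le_rfl
  simp only [zero_div, add_zero, div_one, prod_const_one] at hmass
  have hterm : ∀ n ∈ range N, (1 + z / ζ 0) * ((∏ k ∈ range N, (1 - ρ n / ζ (k + 1))) /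
      (∏ k ∈ (range N).erase n, (1 - ρ n / ρ k)) * (ρ n / (ρ n + z))) =
      (∏ k ∈ range N, (1 - ρ n / ζ (k + 1))) / (∏ k ∈ (range N).erase n, (1 - ρ n / ρ k)) *
        (ρ n / ρ n) + pfCoeffTrunc ζ ρ N n * (1 - ρ n / (ρ n + z)) := by
    intro n hn
    rw [pfCoeffTrunc_eq ζ ρ (mem_range.1 hn)]
    have := (h.zeta_pos 0).ne'
    have := (h.rho_pos n).ne'
    have := (add_pos_of_pos_of_nonneg (h.rho_pos n) hz).ne'
    field_simp
    ring
  rw [prod_range_div_mul, hpf hz, mul_add, mul_sum, sum_congr rfl hterm, sum_add_distrib]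
  linear_combination -hmass

theorem tendsto_prod_range_mul (h : Interlacing ζ ρ) (hρ : Tendsto ρ atTop atTop) {z : ℝ}
    (hz : 0 < z) :
    Tendsto (fun N => (∏ k ∈ range N, (1 + z / ζ k) / (1 + z / ρ k)) * (1 + z / ζ N)) atTop
      (𝓝 (1 / ∏' n, (1 + z / ρ n) / (1 + z / ζ n))) := by
  have hsum : Summable fun k => (1 + z / ρ k) / (1 + z / ζ k) - 1 :=
    summable_one_add_div_div_one_add_div_sub_one (h.tendsto_zeta_atTop hρ)
      (h.summable_inv_sub_inv.neg.congr fun k => neg_sub _ _) z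
  have hpos (k : ℕ) : 0 < (1 + z / ρ k) / (1 + z / ζ k) := by
    have := h.rho_pos k
    have := h.zeta_pos k
    positivity
  have hinv := ((Real.multipliable_of_summable_sub_one hsum).hasProd.inv₀
    (Real.tprod_pos_of_summable_sub_one hpos hsum).ne').tendsto_prod_nat
  have hζN : Tendsto (fun N => 1 + z / ζ N) atTop (𝓝 1) := by
    simpa using tendsto_const_nhds.add (tendsto_const_nhds.div_atTop (h.tendsto_zeta_atTop hρ))
  simpa only [inv_div, one_div, mul_one] using hinv.mul hζN

end Interlacing

/-- Partial fraction decomposition of the reciprocal interlacing infinite product: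
`1/φ(z) = 1 + z b₀ + Σₙ bₙ (1 - ρₙ/(ρₙ + z))` for `z > 0`, with `b₀ ≥ 0` and `bₙ > 0`. -/
theorem interlacing_product_reciprocal_partial_fractions
    (ρ ζ : ℕ → ℝ) (b0 : ℝ) (b : ℕ → ℝ)
    (hζpos : ∀ n, 0 < ζ n)
    (hinter : ∀ n, ζ n < ρ n) (hinter' : ∀ n, ρ n < ζ (n + 1))
    (hρtop : Tendsto ρ atTop atTop)
    (hb0 : Tendsto (fun n => (1 / ζ 0) * ∏ k ∈ range n, ρ k / ζ (k + 1)) atTop (nhds b0))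
    (hb : ∀ n, b n = -(1 - ρ n / ζ n) *
      ∏' k : {k : ℕ // k ≠ n}, (1 - ρ n / ζ (k : ℕ)) / (1 - ρ n / ρ (k : ℕ))) :
    0 ≤ b0 ∧ (∀ n, 0 < b n) ∧
      ∀ z : ℝ, 0 < z →
        1 / (∏' n, (1 + z / ρ n) / (1 + z / ζ n)) =
          1 + z * b0 + ∑' n, b n * (1 - ρ n / (ρ n + z)) := by
  have h : Interlacing ζ ρ := ⟨hζpos, hinter, hinter'⟩
  obtain rfl : b = pfCoeff ζ ρ := funext hb
  refine ⟨ge_of_tendsto' hb0 fun N => ?_, h.pfCoeff_pos hρtop, fun z hz => ?_⟩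
  · exact (mul_pos (one_div_pos.2 (hζpos 0))
      (prod_pos fun k _ => div_pos (h.rho_pos k) (hζpos _))).le
  have hweight (n : ℕ) : 0 ≤ 1 - ρ n / (ρ n + z) :=
    sub_nonneg.2 (div_le_one_of_le₀ (by linarith) (by linarith [h.rho_pos n]))
  have hS := ((h.tendsto_prod_range_mul hρtop hz).sub_const 1).sub (hb0.const_mul z)
  have hsum := hasSum_of_tendsto_sum_range_of_monotone
    (c := fun N n => pfCoeffTrunc ζ ρ N n * (1 - ρ n / (ρ n + z)))
    (fun hn => mul_nonneg (h.pfCoeffTrunc_pos hn).le (hweight _))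
    (fun hn => mul_le_mul_of_nonneg_right (h.pfCoeffTrunc_le_succ hn) (hweight _))
    (fun n => (h.tendsto_pfCoeffTrunc hρtop n).mul_const _)
    (hS.congr fun N => by rw [h.prod_range_mul_eq N hz.le]; ring)
  rw [hsum.tsum_eq]
  ring
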